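/- Let p ∈ (3/2,∞], 1/p + 1/q = 1, and let f : ℝ³ × ℝ³ → [0,∞) be measurable with finite L¹, L^p, and kinetic norms. Define ρ(x) = ∫ f(x,v) dv and E_K = ∫∫ √(1+|v|²) f(x,v) dx dv. Then ‖ρ‖_{(q+3)/(q+2)} ≤ C_q ‖f‖_p^{q/(q+3)} E_K^{3/(q+3)}, with C_q = (4π/3)^{1/(q+3)} ((q+3)/3) (3/q)^{q/(q+3)}. -/

import Mathlib

/-!
Split `ρ(x) = ∫ f(x,v) dv` at a radius `R`. On the ball `|v| < R`, Hölder's inequality gives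
`‖f(x,·)‖_p |B_R|^{1/q}`, which grows like `R^{d/q}`; off the ball `1 ≤ |v|/R`, so that part is at
most `R⁻¹ ∫ |v| f(x,v) dv`. Minimising over `R` yields the pointwise bound
`ρ(x) ≤ C ‖f(x,·)‖_p^{q/(q+d)} (∫ |v| f(x,v) dv)^{d/(q+d)}`. The exponent `r = (q+d)/(q+d-1)` is
the one for which Hölder's inequality in `x`, with exponents `p(q+d-1)/q` and `(q+d-1)/d`, bounds
`∫ ρ^r` by `‖f‖_p^{qr/(q+d)} (∫∫ |v| f)^{dr/(q+d)}`. Finally `|v| ≤ √(1+|v|²)`.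
-/

open Real MeasureTheory ENNReal
open Filter Topology Module Metric

section Optimization

variable {d q : ℝ}

lemma mul_rpow_add_div_rescale (hd : 0 < d) (hq : 0 < q) {a b μ : ℝ} (ha : 0 < a) (hb : 0 < b)
    (hμ : 0 < μ) :
    a * (μ * (b / a) ^ (q / (q + d))) ^ (d / q) + b / (μ * (b / a) ^ (q / (q + d))) =
      (μ ^ (d / q) + μ⁻¹) * a ^ (q / (q + d)) * b ^ (d / (q + d)) := by
  have hqd : 0 < q + d := by linarith
  have hts : q / (q + d) + d / (q + d) = 1 := by field_simp
  have hexp : q / (q + d) * (d / q) = d / (q + d) := by field_simp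
  have hpow : ((b / a) ^ (q / (q + d))) ^ (d / q) = b ^ (d / (q + d)) / a ^ (d / (q + d)) := by
    rw [← rpow_mul (div_pos hb ha).le, hexp, div_rpow hb.le ha.le]
  have hat : a ^ (q / (q + d)) = a / a ^ (d / (q + d)) := by
    rw [show q / (q + d) = 1 - d / (q + d) by linarith, rpow_sub ha, Real.rpow_one]
  have hbs : b ^ (d / (q + d)) = b / b ^ (q / (q + d)) := by
    rw [show d / (q + d) = 1 - q / (q + d) by linarith, rpow_sub hb, Real.rpow_one]
  rw [mul_rpow hμ.le (by positivity), hpow, div_rpow hb.le ha.le, hat, hbs]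
  have : 0 < a ^ (d / (q + d)) := by positivity
  have : 0 < b ^ (q / (q + d)) := by positivity
  field_simp

lemma rpow_add_inv_at_optimum (hd : 0 < d) (hq : 0 < q) :
    ((q / d) ^ (q / (q + d))) ^ (d / q) + ((q / d) ^ (q / (q + d)))⁻¹ =
      (q + d) / d * (d / q) ^ (q / (q + d)) := by
  have hqd : 0 < q + d := by linarith
  rw [← rpow_mul (by positivity), show q / (q + d) * (d / q) = 1 - q / (q + d) by field_simp; ring,
    rpow_sub (by positivity), Real.rpow_one, div_eq_mul_inv, ← inv_rpow (by positivity), inv_div]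
  field_simp

lemma le_zero_of_forall_le_mul_rpow_add_div (hd : 0 < d) (hq : 0 < q) {a b ρ : ℝ}
    (hab : a = 0 ∨ b = 0) (h : ∀ R, 0 < R → ρ ≤ a * R ^ (d / q) + b / R) : ρ ≤ 0 := by
  rcases hab with rfl | rfl
  · have hlim : Tendsto (fun R : ℝ => b / R) atTop (𝓝 0) :=
      tendsto_const_nhds.div_atTop tendsto_id
    refine ge_of_tendsto hlim ?_
    filter_upwards [eventually_gt_atTop 0] with R hR
    simpa using h R hR
  · have hlim : Tendsto (fun R : ℝ => a * R ^ (d / q)) (𝓝[>] 0) (𝓝 0) := by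
      have := ((continuousAt_rpow_const 0 (d / q) (Or.inr (by positivity))).tendsto.const_mul a)
      simpa [zero_rpow (by positivity : d / q ≠ 0)] using this.mono_left nhdsWithin_le_nhds
    refine ge_of_tendsto hlim ?_
    filter_upwards [self_mem_nhdsWithin] with R hR
    simpa using h R hR

lemma le_of_forall_le_mul_rpow_add_div (hd : 0 < d) (hq : 0 < q) {a b ρ : ℝ} (ha : 0 ≤ a)
    (hb : 0 ≤ b) (h : ∀ R, 0 < R → ρ ≤ a * R ^ (d / q) + b / R) :
    ρ ≤ (q + d) / d * (d / q) ^ (q / (q + d)) * a ^ (q / (q + d)) * b ^ (d / (q + d)) := by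
  rcases ha.eq_or_lt with rfl | ha
  · exact (le_zero_of_forall_le_mul_rpow_add_div hd hq (.inl rfl) h).trans (by positivity)
  rcases hb.eq_or_lt with rfl | hb
  · exact (le_zero_of_forall_le_mul_rpow_add_div hd hq (.inr rfl) h).trans (by positivity)
  -- `R ↦ a R^{d/q} + b/R` is minimal at `R = (q/d)^{q/(q+d)} (b/a)^{q/(q+d)}`.
  have hμ : 0 < (q / d) ^ (q / (q + d)) := by positivity
  have := h _ (mul_pos hμ (rpow_pos_of_pos (div_pos hb ha) (q / (q + d))))
  rwa [mul_rpow_add_div_rescale hd hq ha hb hμ, rpow_add_inv_at_optimum hd hq] at this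

lemma ENNReal.le_of_forall_le_mul_rpow_add_div (hd : 0 < d) (hq : 0 < q) {a b ρ : ℝ≥0∞} (ha : a ≠ ∞) (hb : b ≠ ∞)
    (h : ∀ R : ℝ, 0 < R → ρ ≤ a * ENNReal.ofReal (R ^ (d / q)) + b / ENNReal.ofReal R) :
    ρ ≤ ENNReal.ofReal ((q + d) / d * (d / q) ^ (q / (q + d))) * a ^ (q / (q + d)) *
      b ^ (d / (q + d)) := by
  have hρ : ρ ≠ ∞ := ne_top_of_le_ne_top (add_ne_top.2 ⟨ha, hb⟩) (by simpa using h 1 one_pos)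
  have hreal : ∀ R, 0 < R → ρ.toReal ≤ a.toReal * R ^ (d / q) + b.toReal / R := by
    intro R hR
    have hdiv : b / ENNReal.ofReal R ≠ ∞ := div_ne_top hb (by simpa using hR)
    have := ENNReal.toReal_mono (add_ne_top.2 ⟨by finiteness, hdiv⟩) (h R hR)
    rwa [toReal_add (by finiteness) hdiv, toReal_mul, toReal_div,
      toReal_ofReal (by positivity), toReal_ofReal hR.le] at this
  have := _root_.le_of_forall_le_mul_rpow_add_div hd hq toReal_nonneg toReal_nonneg hreal
  rw [← ofReal_toReal hρ, ← ofReal_toReal ha, ← ofReal_toReal hb,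
    ofReal_rpow_of_nonneg toReal_nonneg (by positivity),
    ofReal_rpow_of_nonneg toReal_nonneg (by positivity), ← ofReal_mul (by positivity),
    ← ofReal_mul (by positivity)]
  exact ofReal_le_ofReal this

end Optimization

lemma ENNReal.HolderConjugate.toReal_inv_add_toReal_inv (p q : ℝ≥0∞) [p.HolderConjugate q] :
    p.toReal⁻¹ + q.toReal⁻¹ = 1 := by
  have h := congrArg ENNReal.toReal (ENNReal.HolderConjugate.inv_add_inv_eq_one p q)
  rwa [toReal_add (inv_ne_top.2 (HolderConjugate.ne_zero p q))
    (inv_ne_top.2 (HolderConjugate.ne_zero q p)), toReal_inv, toReal_inv, toReal_one] at h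

lemma setLIntegral_le_eLpNorm_mul_measure_rpow {α : Type*} [MeasurableSpace α] {ν : Measure α}
    {p q : ℝ≥0∞} [p.HolderConjugate q] {g : α → ℝ≥0∞} (hg : AEMeasurable g ν) (s : Set α) :
    ∫⁻ v in s, g v ∂ν ≤ eLpNorm g p ν * ν s ^ q.toReal⁻¹ := by
  have h := eLpNorm_le_eLpNorm_mul_rpow_measure_univ (HolderConjugate.one_le p q)
    (hg.restrict (s := s)).aestronglyMeasurable
  rw [eLpNorm_one_eq_lintegral_enorm, Measure.restrict_apply_univ, toReal_one, one_div, one_div,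
    inv_one, ← HolderConjugate.toReal_inv_add_toReal_inv p q, add_sub_cancel_left] at h
  simp only [enorm_eq_self] at h
  exact h.trans (by gcongr; exact Measure.restrict_le_self)

lemma setLIntegral_compl_ball_le {E : Type*} [SeminormedAddCommGroup E] [MeasurableSpace E]
    [OpensMeasurableSpace E] {ν : Measure E} (g : E → ℝ≥0∞) {R : ℝ} (hR : 0 < R) :
    ∫⁻ v in (ball 0 R)ᶜ, g v ∂ν ≤ (∫⁻ v, ‖v‖ₑ * g v ∂ν) / ENNReal.ofReal R := by
  rw [ENNReal.le_div_iff_mul_le (.inl (by simpa using hR)) (.inl ofReal_ne_top), mul_comm,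
    ← lintegral_const_mul' _ _ ofReal_ne_top]
  refine (setLIntegral_mono' measurableSet_ball.compl fun v hv => ?_).trans
    (setLIntegral_le_lintegral _ _)
  have : R ≤ ‖v‖ := by simpa using hv
  gcongr
  rw [← ofReal_norm]
  exact ofReal_le_ofReal this

-- `ω` is the volume of the unit ball of `ℝ^d`.
noncomputable def interpolationConst (ω d q : ℝ) : ℝ :=
  ω ^ (1 / (q + d)) * ((q + d) / d) * (d / q) ^ (q / (q + d))

section Interpolation

variable {E : Type*} [NormedAddCommGroup E] [NormedSpace ℝ E] [FiniteDimensional ℝ E]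
  [Nontrivial E] [MeasurableSpace E] [BorelSpace E] {ν : Measure E} [ν.IsAddHaarMeasure]

lemma addHaar_ball_rpow_inv {q R : ℝ} (hq : 0 ≤ q) (hR : 0 < R) :
    ν (ball 0 R) ^ q⁻¹ =
      ENNReal.ofReal ((ν (ball 0 1)).toReal ^ q⁻¹) * ENNReal.ofReal (R ^ (finrank ℝ E / q)) := by
  set ω := (ν (ball 0 1)).toReal
  have hω : ν (ball 0 1) = ENNReal.ofReal ω := (ofReal_toReal measure_ball_lt_top.ne).symm
  rw [Measure.addHaar_ball ν 0 hR.le, hω, ← ofReal_mul (by positivity),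
    ofReal_rpow_of_nonneg (by positivity) (by positivity), mul_rpow (by positivity) toReal_nonneg,
    ← Real.rpow_natCast, ← rpow_mul hR.le, ofReal_mul (by positivity), mul_comm, div_eq_mul_inv]

variable (ν) in
lemma lintegral_le_interpolationConst_mul {p q : ℝ≥0∞} [p.HolderConjugate q] (hq : q ≠ ∞)
    {g : E → ℝ≥0∞} (hg : AEMeasurable g ν) (hgp : eLpNorm g p ν ≠ ∞)
    (hgm : ∫⁻ v, ‖v‖ₑ * g v ∂ν ≠ ∞) :
    ∫⁻ v, g v ∂ν ≤
      ENNReal.ofReal (interpolationConst (ν (ball 0 1)).toReal (finrank ℝ E) q.toReal) *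
        eLpNorm g p ν ^ (q.toReal / (q.toReal + finrank ℝ E)) *
        (∫⁻ v, ‖v‖ₑ * g v ∂ν) ^ ((finrank ℝ E : ℝ) / (q.toReal + finrank ℝ E)) := by
  set d : ℝ := (finrank ℝ E : ℝ)
  set ω := (ν (ball 0 1)).toReal
  have hq0 : 0 < q.toReal := toReal_pos (HolderConjugate.ne_zero q p) hq
  have hd : 0 < d := Nat.cast_pos.2 finrank_pos
  have key := ENNReal.le_of_forall_le_mul_rpow_add_div hd hq0
    (a := eLpNorm g p ν * ENNReal.ofReal (ω ^ q.toReal⁻¹)) (by finiteness) hgm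
    (ρ := ∫⁻ v, g v ∂ν) fun R hR => by
      rw [← lintegral_add_compl _ measurableSet_ball, mul_assoc, ← addHaar_ball_rpow_inv hq0.le hR]
      exact add_le_add (setLIntegral_le_eLpNorm_mul_measure_rpow hg _)
        (setLIntegral_compl_ball_le g hR)
  have hω : ENNReal.ofReal (ω ^ q.toReal⁻¹) ^ (q.toReal / (q.toReal + d)) =
      ENNReal.ofReal (ω ^ (1 / (q.toReal + d))) := by
    rw [ofReal_rpow_of_nonneg (by positivity) (by positivity), ← rpow_mul toReal_nonneg]
    congr 2
    field_simp
  rw [mul_rpow_of_nonneg _ _ (by positivity), hω] at key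
  refine key.trans_eq ?_
  rw [interpolationConst, mul_assoc (ω ^ _), ofReal_mul (rpow_nonneg toReal_nonneg _)]
  ring

end Interpolation

section Slices

variable {α β : Type*} [MeasurableSpace α] [MeasurableSpace β] {μ : Measure α} {ν : Measure β}
  [SFinite ν] {F : α × β → ℝ≥0∞} {p : ℝ≥0∞}

variable (ν) in
lemma measurable_eLpNorm_slice (hF : Measurable F) (hp : p ≠ ∞) :
    Measurable fun x => eLpNorm (fun y => F (x, y)) p ν := by
  rcases eq_or_ne p 0 with rfl | hp0
  · simp
  simp_rw [eLpNorm_eq_lintegral_rpow_enorm_toReal hp0 hp, enorm_eq_self]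
  exact (hF.pow_const _).lintegral_prod_right'.pow_const _

lemma lintegral_eLpNorm_slice_rpow (hF : Measurable F) (hp0 : p ≠ 0) (hp : p ≠ ∞) :
    ∫⁻ x, eLpNorm (fun y => F (x, y)) p ν ^ p.toReal ∂μ = eLpNorm F p (μ.prod ν) ^ p.toReal := by
  have hpr : p.toReal ≠ 0 := (toReal_pos hp0 hp).ne'
  simp_rw [eLpNorm_eq_lintegral_rpow_enorm_toReal hp0 hp, enorm_eq_self, one_div,
    ← ENNReal.rpow_mul, inv_mul_cancel₀ hpr, ENNReal.rpow_one]
  exact (lintegral_prod _ (hF.pow_const _).aemeasurable).symm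

variable (ν F) in
lemma ae_eLpNorm_top_slice_le :
    ∀ᵐ x ∂μ, eLpNorm (fun y => F (x, y)) ∞ ν ≤ eLpNorm F ∞ (μ.prod ν) := by
  filter_upwards [Measure.ae_ae_of_ae_prod (ae_le_eLpNormEssSup (f := F) (μ := μ.prod ν))] with x hx
  exact eLpNormEssSup_le_of_ae_enorm_bound hx

lemma ae_eLpNorm_slice_lt_top (hF : Measurable F) (hN : eLpNorm F p (μ.prod ν) ≠ ∞) :
    ∀ᵐ x ∂μ, eLpNorm (fun y => F (x, y)) p ν < ∞ := by
  rcases eq_or_ne p 0 with rfl | hp0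
  · simp
  rcases eq_or_ne p ∞ with rfl | hp
  · filter_upwards [ae_eLpNorm_top_slice_le ν F] with x hx
    exact hx.trans_lt hN.lt_top
  have hpos := toReal_pos hp0 hp
  filter_upwards [ae_lt_top (μ := μ) ((measurable_eLpNorm_slice ν hF hp).pow_const p.toReal)
    (by rw [lintegral_eLpNorm_slice_rpow hF hp0 hp]; finiteness)] with x hx
  exact (rpow_lt_top_iff_of_pos hpos).1 hx

lemma lintegral_eLpNorm_slice_rpow_mul_le (hF : Measurable F) (hp0 : p ≠ 0) {B : α → ℝ≥0∞}
    (hB : AEMeasurable B μ) {a b : ℝ} (ha : 0 ≤ a) (hb : 0 ≤ b) (hab : a * p.toReal⁻¹ + b = 1) :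
    ∫⁻ x, eLpNorm (fun y => F (x, y)) p ν ^ a * B x ^ b ∂μ ≤
      eLpNorm F p (μ.prod ν) ^ a * (∫⁻ x, B x ∂μ) ^ b := by
  rcases eq_or_ne p ∞ with rfl | hp
  · obtain rfl : b = 1 := by simpa using hab
    simp_rw [ENNReal.rpow_one]
    rw [← lintegral_const_mul'' _ hB]
    refine lintegral_mono_ae ?_
    filter_upwards [ae_eLpNorm_top_slice_le ν F] with x hx
    gcongr
  have hpr : p.toReal ≠ 0 := (toReal_pos hp0 hp).ne'
  have hHolder := lintegral_mul_norm_pow_le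
    ((measurable_eLpNorm_slice ν hF hp).pow_const p.toReal).aemeasurable hB
    (div_nonneg ha toReal_nonneg) hb (by rwa [div_eq_mul_inv])
  simp_rw [← ENNReal.rpow_mul, mul_div_cancel₀ _ hpr] at hHolder
  rwa [lintegral_eLpNorm_slice_rpow hF hp0 hp, ← ENNReal.rpow_mul, mul_div_cancel₀ _ hpr] at hHolder

lemma eLpNorm_const_mul_eLpNorm_slice_rpow_mul_le (hF : Measurable F) (hp0 : p ≠ 0)
    {B : α → ℝ≥0∞} (hB : AEMeasurable B μ) {c : ℝ≥0∞} (hc : c ≠ ∞) {r t s : ℝ} (hr : 0 < r)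
    (ht : 0 ≤ t) (hs : 0 ≤ s) (hts : t * p.toReal⁻¹ + s = r⁻¹) :
    eLpNorm (fun x => c * eLpNorm (fun y => F (x, y)) p ν ^ t * B x ^ s) (ENNReal.ofReal r) μ ≤
      c * eLpNorm F p (μ.prod ν) ^ t * (∫⁻ x, B x ∂μ) ^ s := by
  have hHolder := lintegral_eLpNorm_slice_rpow_mul_le (ν := ν) hF hp0 hB
    (mul_nonneg ht hr.le) (mul_nonneg hs hr.le)
    (by rw [mul_right_comm, ← add_mul, hts, inv_mul_cancel₀ hr.ne'])
  rw [eLpNorm_eq_lintegral_rpow_enorm_toReal (by simpa using hr) ofReal_ne_top,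
    toReal_ofReal hr.le]
  simp_rw [enorm_eq_self, mul_rpow_of_nonneg _ _ hr.le, ← ENNReal.rpow_mul, mul_assoc]
  rw [lintegral_const_mul' _ _ (by finiteness)]
  calc (c ^ r * ∫⁻ x, eLpNorm (fun y => F (x, y)) p ν ^ (t * r) * B x ^ (s * r) ∂μ) ^ (1 / r)
      ≤ (c ^ r * (eLpNorm F p (μ.prod ν) ^ (t * r) * (∫⁻ x, B x ∂μ) ^ (s * r))) ^ (1 / r) := by
        gcongr
    _ = c * (eLpNorm F p (μ.prod ν) ^ t * (∫⁻ x, B x ∂μ) ^ s) := by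
        rw [mul_rpow_of_nonneg _ _ (by positivity), mul_rpow_of_nonneg _ _ (by positivity),
          ← ENNReal.rpow_mul, ← ENNReal.rpow_mul, ← ENNReal.rpow_mul, mul_one_div_cancel hr.ne',
          ENNReal.rpow_one, mul_assoc, mul_one_div_cancel hr.ne', mul_one, mul_assoc,
          mul_one_div_cancel hr.ne', mul_one]

end Slices

theorem eLpNorm_lintegral_le_interpolationConst_mul {α E : Type*} [MeasurableSpace α]
    {μ : Measure α} [NormedAddCommGroup E] [NormedSpace ℝ E] [FiniteDimensional ℝ E] [Nontrivial E]
    [MeasurableSpace E] [BorelSpace E] {ν : Measure E} [ν.IsAddHaarMeasure]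
    {F : α × E → ℝ≥0∞} (hF : Measurable F) {p q : ℝ≥0∞} [p.HolderConjugate q] (hq : q ≠ ∞)
    (hN : eLpNorm F p (μ.prod ν) ≠ ∞) (hM : ∫⁻ z, ‖z.2‖ₑ * F z ∂μ.prod ν ≠ ∞) :
    eLpNorm (fun x => ∫⁻ v, F (x, v) ∂ν)
        (ENNReal.ofReal ((q.toReal + finrank ℝ E) / (q.toReal + finrank ℝ E - 1))) μ ≤
      ENNReal.ofReal (interpolationConst (ν (ball 0 1)).toReal (finrank ℝ E) q.toReal) *
        eLpNorm F p (μ.prod ν) ^ (q.toReal / (q.toReal + finrank ℝ E)) *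
        (∫⁻ z, ‖z.2‖ₑ * F z ∂μ.prod ν) ^ ((finrank ℝ E : ℝ) / (q.toReal + finrank ℝ E)) := by
  set d : ℝ := (finrank ℝ E : ℝ)
  set B : α → ℝ≥0∞ := fun x => ∫⁻ v, ‖v‖ₑ * F (x, v) ∂ν
  have hFv : Measurable fun z : α × E => ‖z.2‖ₑ * F z := measurable_snd.enorm.mul hF
  have hB : Measurable B := hFv.lintegral_prod_right'
  have hBint : ∫⁻ x, B x ∂μ = ∫⁻ z, ‖z.2‖ₑ * F z ∂μ.prod ν :=
    (lintegral_prod _ hFv.aemeasurable).symm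
  have hq1 : 1 ≤ q.toReal := by
    simpa using toReal_mono hq (HolderConjugate.one_le q p)
  have hd : 1 ≤ d := Nat.one_le_cast.2 finrank_pos
  have hpointwise : ∀ᵐ x ∂μ, ∫⁻ v, F (x, v) ∂ν ≤
      ENNReal.ofReal (interpolationConst (ν (ball 0 1)).toReal d q.toReal) *
        eLpNorm (fun v => F (x, v)) p ν ^ (q.toReal / (q.toReal + d)) *
        B x ^ (d / (q.toReal + d)) := by
    filter_upwards [ae_eLpNorm_slice_lt_top hF hN, ae_lt_top hB (hBint ▸ hM)] with x hxp hxm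
    exact lintegral_le_interpolationConst_mul ν hq (hF.comp measurable_prodMk_left).aemeasurable
      hxp.ne hxm.ne
  have hexp : q.toReal / (q.toReal + d) * p.toReal⁻¹ + d / (q.toReal + d) =
      ((q.toReal + d) / (q.toReal + d - 1))⁻¹ := by
    have hp : p.toReal⁻¹ = 1 - q.toReal⁻¹ := by
      linarith [HolderConjugate.toReal_inv_add_toReal_inv p q]
    have : q.toReal + d - 1 ≠ 0 := by linarith
    rw [hp]
    field_simp
    ring
  have hr : 0 < (q.toReal + d) / (q.toReal + d - 1) := div_pos (by linarith) (by linarith)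
  rw [← hBint]
  exact (eLpNorm_mono_enorm_ae hpointwise).trans
    (eLpNorm_const_mul_eLpNorm_slice_rpow_mul_le hF (HolderConjugate.ne_zero p q) hB.aemeasurable
      ofReal_ne_top hr (by positivity) (by positivity) hexp)

lemma lintegral_enorm_snd_mul_le_ofReal_integral {α E : Type*} [MeasurableSpace α]
    [SeminormedAddCommGroup E] [MeasurableSpace E] {μ : Measure (α × E)} {f : α × E → ℝ}
    (hf : ∀ z, 0 ≤ f z) (hkin : Integrable (fun z => √(1 + ‖z.2‖ ^ 2) * f z) μ) :
    ∫⁻ z, ‖z.2‖ₑ * ‖f z‖ₑ ∂μ ≤ ENNReal.ofReal (∫ z, √(1 + ‖z.2‖ ^ 2) * f z ∂μ) := by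
  rw [ofReal_integral_eq_lintegral_ofReal hkin
    (ae_of_all _ fun z => mul_nonneg (Real.sqrt_nonneg _) (hf z))]
  refine lintegral_mono fun z => ?_
  rw [← ofReal_norm, Real.enorm_of_nonneg (hf z), ← ofReal_mul (norm_nonneg _)]
  exact ofReal_le_ofReal (mul_le_mul_of_nonneg_right (Real.le_sqrt_of_sq_le (by linarith)) (hf z))

lemma volume_ball_fin_three_toReal :
    (volume (ball (0 : EuclideanSpace ℝ (Fin 3)) 1)).toReal = 4 * π / 3 := by
  rw [EuclideanSpace.volume_ball_fin_three, ofReal_one, one_pow, one_mul,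
    toReal_ofReal (by positivity)]
  ring

theorem density_Lp_estimate_general
    (f : EuclideanSpace ℝ (Fin 3) × EuclideanSpace ℝ (Fin 3) → ℝ)
    (hf_meas : Measurable f) (hf_nonneg : ∀ z, 0 ≤ f z)
    (p q : ℝ≥0∞) (hp : (3 / 2 : ℝ≥0∞) < p) (hpq : 1 / p + 1 / q = 1)
    (hLp : eLpNorm f p volume ≠ ∞)
    (hkin : Integrable (fun z : EuclideanSpace ℝ (Fin 3) × EuclideanSpace ℝ (Fin 3) =>
      Real.sqrt (1 + ‖z.2‖ ^ 2) * f z)) :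
    (eLpNorm (fun x : EuclideanSpace ℝ (Fin 3) => ∫ v, f (x, v))
        (ENNReal.ofReal ((q.toReal + 3) / (q.toReal + 2))) volume).toReal ≤
      ((4 * π / 3) ^ (1 / (q.toReal + 3)) * ((q.toReal + 3) / 3) *
          (3 / q.toReal) ^ (q.toReal / (q.toReal + 3))) *
        (eLpNorm f p volume).toReal ^ (q.toReal / (q.toReal + 3)) *
        (∫ z : EuclideanSpace ℝ (Fin 3) × EuclideanSpace ℝ (Fin 3),
            Real.sqrt (1 + ‖z.2‖ ^ 2) * f z) ^ (3 / (q.toReal + 3)) := by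
  have : p.HolderConjugate q := holderConjugate_iff.2 (by simpa only [one_div] using hpq)
  have hq : q ≠ ∞ := fun h => by
    rw [(HolderConjugate.eq_top_iff_eq_one q p).1 h] at hp
    exact absurd ((ENNReal.div_lt_iff (by norm_num) (by norm_num)).1 hp) (by norm_num)
  rw [Measure.volume_eq_prod] at hLp hkin ⊢
  have hM := lintegral_enorm_snd_mul_le_ofReal_integral hf_nonneg hkin
  have hmain := eLpNorm_lintegral_le_interpolationConst_mul hf_meas.enorm hq
    (by rwa [eLpNorm_enorm]) (hM.trans_lt ofReal_lt_top).ne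
  rw [finrank_euclideanSpace_fin, Nat.cast_ofNat, volume_ball_fin_three_toReal, eLpNorm_enorm,
    show q.toReal + 3 - 1 = q.toReal + 2 by ring] at hmain
  have hρ := eLpNorm_mono_enorm (p := ENNReal.ofReal ((q.toReal + 3) / (q.toReal + 2)))
    (μ := volume) (g := fun x => ∫⁻ v, ‖f (x, v)‖ₑ) fun x =>
      (enorm_integral_le_lintegral_enorm fun v => f (x, v)).trans_eq (enorm_eq_self _).symm
  have hbound := hρ.trans (hmain.trans (mul_le_mul_right (rpow_le_rpow hM (by positivity)) _))
  refine (toReal_mono (by finiteness) hbound).trans_eq ?_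
  rw [toReal_mul, toReal_mul, interpolationConst, toReal_ofReal (by positivity), ← toReal_rpow,
    ← toReal_rpow,
    toReal_ofReal (integral_nonneg fun z => mul_nonneg (sqrt_nonneg _) (hf_nonneg z))]

/-- For `p ∈ (3/2,∞]`, `1/p + 1/q = 1`, and measurable `f ≥ 0` on `ℝ³ × ℝ³` with finite
`L¹`, `L^p` and kinetic norms, the spatial density `ρ(x) = ∫ f(x,v) dv` satisfies
`‖ρ‖_{(q+3)/(q+2)} ≤ C_q ‖f‖_p^{q/(q+3)} E_K^{3/(q+3)}` where
`E_K = ∫∫ √(1+|v|²) f` and `C_q = (4π/3)^{1/(q+3)} ((q+3)/3) (3/q)^{q/(q+3)}`. -/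
theorem density_Lp_estimate
    (f : EuclideanSpace ℝ (Fin 3) × EuclideanSpace ℝ (Fin 3) → ℝ)
    (hf_meas : Measurable f) (hf_nonneg : ∀ z, 0 ≤ f z)
    (p q : ℝ≥0∞) (hp : (3 / 2 : ℝ≥0∞) < p) (hpq : 1 / p + 1 / q = 1)
    (hL1 : Integrable f) (hLp : eLpNorm f p volume ≠ ∞)
    (hkin : Integrable (fun z : EuclideanSpace ℝ (Fin 3) × EuclideanSpace ℝ (Fin 3) =>
      Real.sqrt (1 + ‖z.2‖ ^ 2) * f z)) :
    (eLpNorm (fun x : EuclideanSpace ℝ (Fin 3) => ∫ v, f (x, v))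
        (ENNReal.ofReal ((q.toReal + 3) / (q.toReal + 2))) volume).toReal ≤
      ((4 * π / 3) ^ (1 / (q.toReal + 3)) * ((q.toReal + 3) / 3) *
          (3 / q.toReal) ^ (q.toReal / (q.toReal + 3))) *
        (eLpNorm f p volume).toReal ^ (q.toReal / (q.toReal + 3)) *
        (∫ z : EuclideanSpace ℝ (Fin 3) × EuclideanSpace ℝ (Fin 3),
            Real.sqrt (1 + ‖z.2‖ ^ 2) * f z) ^ (3 / (q.toReal + 3)) :=
  density_Lp_estimate_general f hf_meas hf_nonneg p q hp hpq hLp hkin
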